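/- With notation as above (R = ⋃_k R_k an increasing union of equivalence relations R_k on ℤ × X, each R_k carrying the subspace topology from ℤ × X × ℤ × X), the inductive limit topology on R (a set is open iff its intersection with each R_k is open in R_k) coincides with the subspace product topology on R. -/
import Mathlib


variable {X : Type*}

/-- The `n`-fold iterate of `h` for `n ≥ 0`, and of the inverse `h'` for `n < 0`. -/
def hIter (h h' : X → X) : ℤ → X → X
  | (n : ℕ) => h^[n]
  | (Int.negSucc n) => h'^[n + 1]

/-- `domPos h U n = U ∩ h⁻¹(U) ∩ ⋯ ∩ h^{-(n-1)}(U)`, the domain of the `n`-fold iterate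
of the partial map `h : U → X`. -/
def domPos (h : X → X) (U : Set X) : ℕ → Set X
  | 0 => Set.univ
  | n + 1 => U ∩ h ⁻¹' domPos h U n

/-- `domI h h' U V n` is the domain of the `n`-th iterate `hIter h h' n` of the partial
homeomorphism `h : U → V` with inverse `h' : V → U`. -/
def domI (h h' : X → X) (U V : Set X) : ℤ → Set X
  | (n : ℕ) => domPos h U n
  | (Int.negSucc n) => domPos h' V (n + 1)

/-- The equivalence relation on `ℤ × X` induced by the partial action generated by the
partial homeomorphism `h : U → V`: `(r,x) ∼ (s,y) ⟺ x ∈ X_{s-r}` and `h_{r-s}(x) = y`,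
where `X_{-n} = dom(hⁿ)`. -/
def RZ (h h' : X → X) (U V : Set X) : Set ((ℤ × X) × (ℤ × X)) :=
  {q | q.1.2 ∈ domI h h' U V (q.1.1 - q.2.1) ∧
    hIter h h' (q.1.1 - q.2.1) q.1.2 = q.2.2}

/-- The subrelation `R_k` induced by restricting `h` to `U_k` (with image `h''U_k`). -/
def RZk (h h' : X → X) (Uk : Set X) : Set ((ℤ × X) × (ℤ × X)) :=
  RZ h h' Uk (h '' Uk)

lemma mem_domPos_iff (h : X → X) (A : Set X) (n : ℕ) (x : X) :
    x ∈ domPos h A n ↔ ∀ j < n, h^[j] x ∈ A := by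
  induction n generalizing x with
  | zero => simp [domPos]
  | succ n ih =>
    simp only [domPos, Set.mem_inter_iff, Set.mem_preimage, ih]
    constructor
    · rintro ⟨hx, hr⟩ j hj
      cases j with
      | zero => exact hx
      | succ j => rw [Function.iterate_succ_apply]; exact hr j (by omega)
    · intro hall
      refine ⟨hall 0 (by omega), fun j hj => ?_⟩
      rw [← Function.iterate_succ_apply]; exact hall (j + 1) (by omega)

lemma domPos_mono (h : X → X) {A B : Set X} (hAB : A ⊆ B) (n : ℕ) :
    domPos h A n ⊆ domPos h B n := by
  intro x hx
  rw [mem_domPos_iff] at hx ⊢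
  exact fun j hj => hAB (hx j hj)

lemma isOpen_domPos [TopologicalSpace X] {h : X → X} {A : Set X} (hA : IsOpen A)
    (hc : ContinuousOn h A) (n : ℕ) : IsOpen (domPos h A n) := by
  induction n with
  | zero => exact isOpen_univ
  | succ n ih => exact hc.isOpen_inter_preimage hA ih

lemma exists_k_forall (Uk : ℕ → Set X) (hmono : Monotone Uk) (p : ℕ → X) (N : ℕ)
    (hp : ∀ j < N, ∃ k, p j ∈ Uk k) : ∃ k, ∀ j < N, p j ∈ Uk k := by
  induction N with
  | zero => exact ⟨0, fun j hj => absurd hj (by omega)⟩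
  | succ N ih =>
    obtain ⟨k₀, hk₀⟩ := ih (fun j hj => hp j (by omega))
    obtain ⟨k₁, hk₁⟩ := hp N (by omega)
    refine ⟨max k₀ k₁, fun j hj => ?_⟩
    rcases Nat.lt_succ_iff_lt_or_eq.mp hj with hj | rfl
    · exact hmono (le_max_left _ _) (hk₀ j hj)
    · exact hmono (le_max_right _ _) hk₁

lemma image_eq_aux {U V A : Set X} (h h' : X → X)
    (hbij : Set.BijOn h U V) (hbij' : Set.BijOn h' V U)
    (hinv : ∀ x ∈ U, h' (h x) = x) (hinv' : ∀ y ∈ V, h (h' y) = y)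
    (hA : A ⊆ U) : h '' A = V ∩ h' ⁻¹' A := by
  ext y
  constructor
  · rintro ⟨x, hx, rfl⟩
    exact ⟨hbij.mapsTo (hA hx), by rw [Set.mem_preimage, hinv x (hA hx)]; exact hx⟩
  · rintro ⟨hyV, hy⟩
    exact ⟨h' y, hy, hinv' y hyV⟩

lemma RZk_subset {U V : Set X} (h h' : X → X) {A : Set X}
    (hbij : Set.BijOn h U V) (hA : A ⊆ U) :
    RZk h h' A ⊆ RZ h h' U V := by
  rintro q ⟨hq1, hq2⟩
  refine ⟨?_, hq2⟩
  rcases hn : q.1.1 - q.2.1 with m | m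
  · rw [hn] at hq1
    exact domPos_mono h hA m hq1
  · rw [hn] at hq1
    refine domPos_mono h' ?_ (m + 1) hq1
    rintro y ⟨x, hx, rfl⟩
    exact hbij.mapsTo (hA hx)

/-- Key localization: every point of `R` has a relatively open neighborhood (with fixed
`ℤ`-coordinates) contained in some `R_k`. -/
lemma key_local [TopologicalSpace X] {U V : Set X} (hU : IsOpen U) (hV : IsOpen V)
    {h h' : X → X} (hbij : Set.BijOn h U V) (hcont : ContinuousOn h U)
    (hbij' : Set.BijOn h' V U) (hcont' : ContinuousOn h' V)
    (hinv : ∀ x ∈ U, h' (h x) = x) (hinv' : ∀ y ∈ V, h (h' y) = y)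
    (Uk : ℕ → Set X) (hUkOpen : ∀ k, IsOpen (Uk k)) (hmono : Monotone Uk)
    (hunion : (⋃ k, Uk k) = U)
    (p : (ℤ × X) × (ℤ × X)) (hp : p ∈ RZ h h' U V) :
    ∃ k, ∃ W : Set X, IsOpen W ∧ p.1.2 ∈ W ∧
      ∀ q ∈ RZ h h' U V, q.1.1 = p.1.1 → q.2.1 = p.2.1 → q.1.2 ∈ W →
        q ∈ RZk h h' (Uk k) := by
  have hUkU : ∀ k, Uk k ⊆ U := fun k => hunion ▸ Set.subset_iUnion Uk k
  have hmemU : ∀ x ∈ U, ∃ k, x ∈ Uk k := by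
    intro x hx
    rw [← hunion] at hx
    exact Set.mem_iUnion.mp hx
  obtain ⟨hp1, -⟩ := hp
  rcases hn : p.1.1 - p.2.1 with m | m
  · -- nonnegative case
    rw [hn] at hp1
    have horb : ∀ j < m, h^[j] p.1.2 ∈ U := (mem_domPos_iff h U m p.1.2).mp hp1
    obtain ⟨k, hk⟩ := exists_k_forall Uk hmono (fun j => h^[j] p.1.2) m
      (fun j hj => hmemU _ (horb j hj))
    refine ⟨k, domPos h (Uk k) m,
      isOpen_domPos (hUkOpen k) (hcont.mono (hUkU k)) m,
      (mem_domPos_iff h (Uk k) m p.1.2).mpr hk, ?_⟩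
    rintro q ⟨-, hq2⟩ ht hs hW
    have hqn : q.1.1 - q.2.1 = Int.ofNat m := by rw [ht, hs, hn]
    rw [hqn] at hq2
    exact ⟨by rw [hqn]; exact hW, by rw [hqn]; exact hq2⟩
  · -- negative case
    rw [hn] at hp1
    have horb : ∀ j < m + 1, h'^[j] p.1.2 ∈ V := (mem_domPos_iff h' V (m + 1) p.1.2).mp hp1
    obtain ⟨k, hk⟩ := exists_k_forall Uk hmono (fun j => h'^[j + 1] p.1.2) (m + 1)
      (fun j hj => hmemU _ (by
        show h'^[j + 1] p.1.2 ∈ U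
        rw [Function.iterate_succ_apply']
        exact hbij'.mapsTo (horb j hj)))
    have himg : h '' Uk k = V ∩ h' ⁻¹' Uk k :=
      image_eq_aux h h' hbij hbij' hinv hinv' (hUkU k)
    have himgOpen : IsOpen (h '' Uk k) := by
      rw [himg]; exact hcont'.isOpen_inter_preimage hV (hUkOpen k)
    refine ⟨k, domPos h' (h '' Uk k) (m + 1),
      isOpen_domPos himgOpen (hcont'.mono (by rw [himg]; exact Set.inter_subset_left)) (m + 1),
      ?_, ?_⟩
    · rw [mem_domPos_iff]
      intro j hj
      rw [himg]
      refine ⟨horb j hj, ?_⟩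
      have := hk j hj
      rw [Function.iterate_succ_apply'] at this
      exact this
    · rintro q ⟨-, hq2⟩ ht hs hW
      have hqn : q.1.1 - q.2.1 = Int.negSucc m := by rw [ht, hs, hn]
      rw [hqn] at hq2
      exact ⟨by rw [hqn]; exact hW, by rw [hqn]; exact hq2⟩

/-- With `R = ⋃ₖ R_k` the increasing union of the relations of the restricted partial
actions (each `R_k` carrying the subspace topology from `ℤ × X × ℤ × X`), the inductive
limit topology on `R` (a set is open iff its trace on each `R_k` is open) coincides with
the subspace product topology on `R`. -/
theorem inductiveLimit_eq_product_topology [TopologicalSpace X] [CompactSpace X]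
    [T2Space X] [TotallyDisconnectedSpace X]
    (U V : Set X) (hU : IsOpen U) (hV : IsOpen V) (hUproper : U ≠ Set.univ)
    (h h' : X → X) (hbij : Set.BijOn h U V) (hcont : ContinuousOn h U)
    (hbij' : Set.BijOn h' V U) (hcont' : ContinuousOn h' V)
    (hinv : ∀ x ∈ U, h' (h x) = x) (hinv' : ∀ y ∈ V, h (h' y) = y)
    (Uk : ℕ → Set X) (hUk : ∀ k, IsClopen (Uk k)) (hmono : Monotone Uk)
    (hunion : (⋃ k, Uk k) = U) :
    ∀ S : Set ((ℤ × X) × (ℤ × X)),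
      (∀ k, IsOpen (Subtype.val ⁻¹' S : Set ↥(RZk h h' (Uk k)))) ↔
        IsOpen (Subtype.val ⁻¹' S : Set ↥(RZ h h' U V)) := by
  have hUkU : ∀ k, Uk k ⊆ U := fun k => hunion ▸ Set.subset_iUnion Uk k
  have hsub : ∀ k, RZk h h' (Uk k) ⊆ RZ h h' U V := fun k => RZk_subset h h' hbij (hUkU k)
  intro S
  constructor
  · -- inductive limit open → open in R
    intro hk
    rw [isOpen_iff_forall_mem_open]
    rintro ⟨p, hpR⟩ hpS
    obtain ⟨k, W, hWopen, hpW, hWsub⟩ := key_local hU hV hbij hcont hbij' hcont' hinv hinv'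
      Uk (fun k => (hUk k).isOpen) hmono hunion p hpR
    obtain ⟨O, hOopen, hOeq⟩ := isOpen_induced_iff.mp (hk k)
    -- the neighborhood in the ambient space
    set N : Set ((ℤ × X) × (ℤ × X)) :=
      ({p.1.1} ×ˢ W) ×ˢ ({p.2.1} ×ˢ (Set.univ : Set X)) with hN
    have hNopen : IsOpen N := ((isOpen_discrete _).prod hWopen).prod
      ((isOpen_discrete _).prod isOpen_univ)
    refine ⟨Subtype.val ⁻¹' (N ∩ O), ?_, (hNopen.inter hOopen).preimage continuous_subtype_val, ?_⟩
    · rintro ⟨q, hqR⟩ ⟨hqN, hqO⟩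
      simp only [hN, Set.mem_prod, Set.mem_singleton_iff, Set.mem_univ, and_true] at hqN
      have hqk : q ∈ RZk h h' (Uk k) := hWsub q hqR hqN.1.1 hqN.2 hqN.1.2
      have : (⟨q, hqk⟩ : ↥(RZk h h' (Uk k))) ∈ Subtype.val ⁻¹' O := hqO
      rw [hOeq] at this
      exact this
    · constructor
      · exact ⟨⟨rfl, hpW⟩, rfl, trivial⟩
      · -- p ∈ O : since p ∈ S ∩ R_k
        have hpk : p ∈ RZk h h' (Uk k) := hWsub p hpR rfl rfl hpW
        have : (⟨p, hpk⟩ : ↥(RZk h h' (Uk k))) ∈ Subtype.val ⁻¹' S := hpS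
        rw [← hOeq] at this
        exact this
  · -- open in R → open on each R_k
    intro hR k
    obtain ⟨O, hOopen, hOeq⟩ := isOpen_induced_iff.mp hR
    rw [isOpen_induced_iff]
    refine ⟨O, hOopen, ?_⟩
    ext ⟨q, hqk⟩
    have hqR : q ∈ RZ h h' U V := hsub k hqk
    have := Set.ext_iff.mp hOeq ⟨q, hqR⟩
    simpa using this
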